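/- arXiv:2103.05393 — 2 statements merged into one kernel-verified Lean document; each statement's English description precedes it below -/
import Mathlib

section
/- Every continuous function g : ℝ² → ℂ satisfying |g(x,y) − φ(x,y)| < 1/20 for all (x,y) ∈ [−π,π]² has a zero in [−π,π]², i.e., there exists (x₀,y₀) ∈ [−π,π]² with g(x₀,y₀) = 0. -/
open Real

/-!
Suppose `g` had no zero on the square `[-π, π]²`. The square is contractible, so `g` has a
continuous logarithm there. On the triangle with vertices `(0, -π)`, `(π, 0)`, `(π, -π)` we have
`|φ| = 1/3 > |g - φ|`, so `g / φ` takes values in the disc of radius `1` about `1`, where the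
principal logarithm is continuous; hence `φ` would have a continuous logarithm on the triangle too.
But along the edge `y = x - π` we have `φ = -(1/3) e^{2ix}`, which winds once around `0`, while `φ`
is constant on the other two edges: the logarithm would have to change by `2πi` around a loop.
-/

noncomputable def phi : ℝ × ℝ → ℂ := fun p =>
  (1 / 3) * (Complex.exp (Complex.I * p.1) + Complex.exp (Complex.I * p.2) +
    Complex.exp (Complex.I * (p.1 + p.2)))

open Complex Set

theorem Complex.exists_continuous_exp_eq {A : Type*} [TopologicalSpace A] [SimplyConnectedSpace A]
    [LocallyPathConnectedSpace A] {f : A → ℂ} (hf : Continuous f) (hf₀ : ∀ a, f a ≠ 0) :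
    ∃ L : A → ℂ, Continuous L ∧ ∀ a, cexp (L a) = f a := by
  obtain ⟨a₀⟩ : Nonempty A := inferInstance
  obtain ⟨L, ⟨-, hL⟩, -⟩ := isCoveringMapOn_exp.existsUnique_continuousMap_lifts ⟨f, hf⟩
    (exp_log (hf₀ a₀)) hf₀
  exact ⟨L, L.continuous, congrFun hL⟩

/-- Precomposing with the retraction of `ℝ²` onto the box reduces this to the simply connected
space `ℝ²`. -/
theorem Complex.exists_continuous_exp_eq_on_Icc_prod {g : ℝ × ℝ → ℂ} {a b c d : ℝ}
    (hab : a ≤ b) (hcd : c ≤ d) (hg : ContinuousOn g (Icc a b ×ˢ Icc c d))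
    (hg₀ : ∀ p ∈ Icc a b ×ˢ Icc c d, g p ≠ 0) :
    ∃ L : ℝ × ℝ → ℂ, Continuous L ∧ ∀ p ∈ Icc a b ×ˢ Icc c d, cexp (L p) = g p := by
  let r : ℝ × ℝ → ℝ × ℝ := fun p => (projIcc a b hab p.1, projIcc c d hcd p.2)
  have hr : ∀ p, r p ∈ Icc a b ×ˢ Icc c d := fun p =>
    ⟨(projIcc a b hab p.1).2, (projIcc c d hcd p.2).2⟩
  have hr_cont : Continuous r := by fun_prop
  obtain ⟨L, hLc, hL⟩ := exists_continuous_exp_eq (hg.comp_continuous hr_cont hr)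
    (fun p => hg₀ _ (hr p))
  refine ⟨L, hLc, fun p hp => ?_⟩
  rw [hL, Function.comp_apply]
  simp [r, projIcc_of_mem hab hp.1, projIcc_of_mem hcd hp.2]

theorem IsPreconnected.sub_eq_sub_of_exp_eq {X : Type*} [TopologicalSpace X] {S : Set X}
    (hS : IsPreconnected S) {f g : X → ℂ} (hf : ContinuousOn f S) (hg : ContinuousOn g S)
    (hfg : ∀ x ∈ S, cexp (f x) = cexp (g x)) {x y : X} (hx : x ∈ S) (hy : y ∈ S) :
    f x - g x = f y - g y :=
  hS.constant_of_mapsTo (T := AddSubgroup.zmultiples (2 * π * I))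
    (isDiscrete_iff_discreteTopology.2 (NormedSpace.discreteTopology_zmultiples _)) (hf.sub hg)
    (fun z hz => by
      obtain ⟨n, hn⟩ := exp_eq_exp_iff_exists_int.1 (hfg z hz)
      exact ⟨n, by simp [hn]⟩)
    hx hy

theorem ContinuousOn.exists_exp_eq_of_norm_sub_lt {X : Type*} [TopologicalSpace X] {S : Set X}
    {f g L : X → ℂ} (hf : ContinuousOn f S) (hg : ContinuousOn g S) (hL : ContinuousOn L S)
    (hLg : ∀ x ∈ S, cexp (L x) = g x) (hfg : ∀ x ∈ S, ‖g x - f x‖ < ‖f x‖) :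
    ∃ M : X → ℂ, ContinuousOn M S ∧ ∀ x ∈ S, cexp (M x) = f x := by
  have hf₀ : ∀ x ∈ S, f x ≠ 0 := fun x hx => norm_pos_iff.1 ((norm_nonneg _).trans_lt (hfg x hx))
  have hslit : ∀ x ∈ S, g x / f x ∈ slitPlane := fun x hx => by
    have h : ‖(g x - f x) / f x‖ < 1 := by
      rw [norm_div, div_lt_one (norm_pos_iff.2 (hf₀ x hx))]
      exact hfg x hx
    simpa [sub_div, div_self (hf₀ x hx)] using mem_slitPlane_of_norm_lt_one h
  refine ⟨fun x => L x - Complex.log (g x / f x), hL.sub ((hg.div hf hf₀).clog hslit),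
    fun x hx => ?_⟩
  have hg₀ : g x ≠ 0 := fun h => slitPlane_ne_zero (hslit x hx) (by simp [h])
  rw [Complex.exp_sub, exp_log (slitPlane_ne_zero (hslit x hx)), hLg x hx,
    div_div_cancel₀ hg₀]

theorem Complex.exp_I_mul_pi : cexp (I * π) = -1 := by rw [mul_comm, exp_pi_mul_I]

theorem phi_mk_sub_pi (x : ℝ) : phi (x, x - π) = -(1 / 3) * cexp (2 * x * I) := by
  have h : cexp (I * (2 * x)) = cexp (2 * x * I) := by ring_nf
  simp only [phi, ofReal_sub, ← h, show (x : ℂ) + (x - π) = 2 * x - π by ring, mul_sub,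
    Complex.exp_sub, exp_I_mul_pi]
  ring

theorem phi_pi_mk (y : ℝ) : phi (π, y) = -(1 / 3) := by
  simp only [phi, mul_add, Complex.exp_add, exp_I_mul_pi]
  ring

theorem phi_mk_neg_pi (x : ℝ) : phi (x, -π) = -(1 / 3) := by
  simp only [phi, ofReal_neg, ← sub_eq_add_neg, mul_neg, mul_sub, Complex.exp_neg,
    Complex.exp_sub, exp_I_mul_pi]
  ring

theorem continuous_phi : Continuous phi := by
  unfold phi
  fun_prop

def triangle : Set (ℝ × ℝ) :=
  (fun x => (x, x - π)) '' Icc 0 π ∪ (fun y => (π, y)) '' Icc (-π) 0 ∪ (fun x => (x, -π)) '' Icc 0 π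

theorem triangle_subset_square : triangle ⊆ Icc (-π) π ×ˢ Icc (-π) π := by
  have hπ := pi_pos
  rintro _ ((⟨x, ⟨h₀, h₁⟩, rfl⟩ | ⟨y, ⟨h₀, h₁⟩, rfl⟩) | ⟨x, ⟨h₀, h₁⟩, rfl⟩) <;>
    exact ⟨⟨by linarith, by linarith⟩, ⟨by linarith, by linarith⟩⟩

theorem norm_phi_of_mem_triangle {p : ℝ × ℝ} (hp : p ∈ triangle) : ‖phi p‖ = 1 / 3 := by
  rcases hp with (⟨x, -, rfl⟩ | ⟨y, -, rfl⟩) | ⟨x, -, rfl⟩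
  · rw [phi_mk_sub_pi, norm_mul, show (2 * x * I : ℂ) = ((2 * x : ℝ) : ℂ) * I by push_cast; ring,
      norm_exp_ofReal_mul_I]
    norm_num
  · rw [phi_pi_mk]; norm_num
  · rw [phi_mk_neg_pi]; norm_num

theorem not_exists_continuousOn_exp_eq_phi_triangle :
    ¬ ∃ M : ℝ × ℝ → ℂ, ContinuousOn M triangle ∧ ∀ p ∈ triangle, cexp (M p) = phi p := by
  rintro ⟨M, hMc, hM⟩
  have edge {e : ℝ → ℝ × ℝ} {a b : ℝ} {ℓ : ℝ × ℝ → ℂ} (he : Continuous e) (hℓ : Continuous ℓ)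
      (hab : a ≤ b) (h_sub : e '' Icc a b ⊆ triangle)
      (hφ : ∀ t ∈ Icc a b, phi (e t) = cexp (ℓ (e t))) :
      M (e a) - ℓ (e a) = M (e b) - ℓ (e b) :=
    (isPreconnected_Icc.image e he.continuousOn).sub_eq_sub_of_exp_eq (hMc.mono h_sub)
      hℓ.continuousOn (by rintro _ ⟨t, ht, rfl⟩; rw [hM _ (h_sub ⟨t, ht, rfl⟩), hφ t ht])
      (mem_image_of_mem _ (left_mem_Icc.2 hab)) (mem_image_of_mem _ (right_mem_Icc.2 hab))
  have hπ := pi_pos.le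
  set c := Complex.log (-(1 / 3))
  have hc : cexp c = -(1 / 3) := exp_log (by norm_num)
  have hdiag := edge (ℓ := fun p => c + 2 * p.1 * I) (by fun_prop) (by fun_prop) hπ
    (fun p hp => .inl (.inl hp)) fun _ _ => by rw [phi_mk_sub_pi, Complex.exp_add, hc]
  have hvert := edge (ℓ := fun _ => c) (by fun_prop) continuous_const (neg_nonpos.2 hπ)
    (fun p hp => .inl (.inr hp)) fun _ _ => by rw [phi_pi_mk, hc]
  have hhor := edge (ℓ := fun _ => c) (by fun_prop) continuous_const hπ
    (fun p hp => .inr hp) fun _ _ => by rw [phi_mk_neg_pi, hc]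
  simp only [zero_sub, sub_self, ofReal_zero] at hdiag
  exact two_pi_I_ne_zero (by linear_combination hdiag - hvert - hhor)

/-- Every continuous `g : ℝ² → ℂ` with `|g − φ| < 1/20` on `[−π,π]²` has a zero there. -/
theorem exists_zero_of_close_to_phi (g : ℝ × ℝ → ℂ) (hg : Continuous g)
    (happrox : ∀ x y : ℝ, x ∈ Set.Icc (-π) π → y ∈ Set.Icc (-π) π →
      ‖g (x, y) - phi (x, y)‖ < 1 / 20) :
    ∃ x₀ y₀ : ℝ, x₀ ∈ Set.Icc (-π) π ∧ y₀ ∈ Set.Icc (-π) π ∧ g (x₀, y₀) = 0 := by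
  by_contra! hg₀
  have hπ : -π ≤ π := by linarith [pi_pos]
  obtain ⟨L, hLc, hL⟩ := exists_continuous_exp_eq_on_Icc_prod hπ hπ hg.continuousOn
    fun p hp => hg₀ p.1 p.2 hp.1 hp.2
  refine not_exists_continuousOn_exp_eq_phi_triangle <|
    continuous_phi.continuousOn.exists_exp_eq_of_norm_sub_lt hg.continuousOn hLc.continuousOn
      (fun p hp => hL p (triangle_subset_square hp)) fun p hp => ?_
  obtain ⟨hx, hy⟩ := triangle_subset_square hp
  rw [norm_phi_of_mem_triangle hp]
  exact (happrox p.1 p.2 hx hy).trans (by norm_num)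
end

section
/- Let g : ℝ² → ℂ be continuous with |g(x,y) − φ(x,y)| < 1/20 for all (x,y) ∈ [−π,π]², and set E = {(x,y) ∈ [−π,π]² : Re g(x,y) = 0}. Then E separates the points (0,0) and (π,−π) in ℝ², i.e., there is no connected subset of ℝ² \ E containing both (0,0) and (π,−π). -/
open Real

/-!
Extend `Re g` from the square `Q = [-π,π]²` to all of `ℝ²` by precomposing with the
nearest-point projection onto `Q`. On `∂Q` one of the coordinates is `±π`, so `Re φ = -1/3`
there and `Re g < 0`; hence the extension vanishes only on `E`. It is positive at `(0,0)`,
where `Re φ = 1`, and negative at the corner `(π,-π)`, so by the intermediate value theorem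
it has a zero on any connected set containing both points.
-/

open Set

lemma cos_add_cos_add_cos_add_of_cos_eq_neg_one {a : ℝ} (b : ℝ) (ha : cos a = -1) :
    cos a + cos b + cos (a + b) = -1 := by
  have hsin : sin a = 0 := by nlinarith [sin_sq_add_cos_sq a]
  rw [cos_add, ha, hsin]
  ring

lemma phi_re (p : ℝ × ℝ) : (phi p).re = (cos p.1 + cos p.2 + cos (p.1 + p.2)) / 3 := by
  simp [phi, Complex.exp_re, Complex.exp_im]
  ring

lemma phi_re_of_cos_eq_neg_one {p : ℝ × ℝ} (hp : cos p.1 = -1 ∨ cos p.2 = -1) :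
    (phi p).re = -1 / 3 := by
  rw [phi_re]
  rcases hp with h | h
  · rw [cos_add_cos_add_cos_add_of_cos_eq_neg_one p.2 h]
  · rw [add_comm (cos p.1), add_comm p.1, cos_add_cos_add_cos_add_of_cos_eq_neg_one p.1 h]

lemma projIcc_eq_left_or_right_of_notMem {a b x : ℝ} (h : a ≤ b) (hx : x ∉ Icc a b) :
    (projIcc a b h x : ℝ) = a ∨ (projIcc a b h x : ℝ) = b := by
  rw [mem_Icc, not_and_or, not_le, not_le] at hx
  rcases hx with hx | hx
  · exact Or.inl (by rw [projIcc_of_le_left h hx.le])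
  · exact Or.inr (by rw [projIcc_of_right_le h hx.le])

lemma neg_pi_le_pi : -π ≤ π := neg_le_self pi_nonneg

noncomputable def squareProj (p : ℝ × ℝ) : ℝ × ℝ :=
  (projIcc (-π) π neg_pi_le_pi p.1, projIcc (-π) π neg_pi_le_pi p.2)

lemma origin_mem_square : ((0 : ℝ), (0 : ℝ)) ∈ Icc (-π) π ×ˢ Icc (-π) π :=
  ⟨⟨neg_nonpos.2 pi_nonneg, pi_nonneg⟩, ⟨neg_nonpos.2 pi_nonneg, pi_nonneg⟩⟩

lemma corner_mem_square : (π, -π) ∈ Icc (-π) π ×ˢ Icc (-π) π :=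
  ⟨⟨neg_pi_le_pi, le_rfl⟩, ⟨le_rfl, neg_pi_le_pi⟩⟩

lemma continuous_squareProj : Continuous squareProj :=
  (continuous_subtype_val.comp (continuous_projIcc.comp continuous_fst)).prodMk
    (continuous_subtype_val.comp (continuous_projIcc.comp continuous_snd))

lemma squareProj_mem (p : ℝ × ℝ) : squareProj p ∈ Icc (-π) π ×ˢ Icc (-π) π :=
  ⟨Subtype.prop _, Subtype.prop _⟩

lemma squareProj_of_mem {p : ℝ × ℝ} (hp : p ∈ Icc (-π) π ×ˢ Icc (-π) π) : squareProj p = p := by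
  simp [squareProj, projIcc_of_mem _ hp.1, projIcc_of_mem _ hp.2]

lemma cos_squareProj_eq_neg_one_of_notMem {p : ℝ × ℝ} (hp : p ∉ Icc (-π) π ×ˢ Icc (-π) π) :
    cos (squareProj p).1 = -1 ∨ cos (squareProj p).2 = -1 := by
  have cos_eq : ∀ x : ℝ, x ∉ Icc (-π) π → cos (projIcc (-π) π neg_pi_le_pi x) = -1 := by
    intro x hx
    rcases projIcc_eq_left_or_right_of_notMem neg_pi_le_pi hx with h | h <;> simp [h]
  rw [mem_prod, not_and_or] at hp
  exact hp.imp (cos_eq p.1) (cos_eq p.2)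

section Perturbation

variable {g : ℝ × ℝ → ℂ}
  (happrox : ∀ p ∈ Icc (-π) π ×ˢ Icc (-π) π, ‖g p - phi p‖ < 1 / 20)
include happrox

lemma abs_re_sub_phi_re_lt {p : ℝ × ℝ} (hp : p ∈ Icc (-π) π ×ˢ Icc (-π) π) :
    |(g p).re - (phi p).re| < 1 / 20 := by
  simpa using (Complex.abs_re_le_norm (g p - phi p)).trans_lt (happrox p hp)

lemma re_neg_of_cos_eq_neg_one {p : ℝ × ℝ} (hp : p ∈ Icc (-π) π ×ˢ Icc (-π) π)
    (hcos : cos p.1 = -1 ∨ cos p.2 = -1) : (g p).re < 0 := by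
  have := abs_re_sub_phi_re_lt happrox hp
  rw [phi_re_of_cos_eq_neg_one hcos, abs_lt] at this
  linarith

lemma re_pos_at_origin : 0 < (g (0, 0)).re := by
  have := abs_re_sub_phi_re_lt happrox origin_mem_square
  rw [phi_re, abs_lt] at this
  norm_num at this
  linarith

lemma re_squareProj_ne_zero {p : ℝ × ℝ}
    (hp : p ∉ {p | p ∈ Icc (-π) π ×ˢ Icc (-π) π ∧ (g p).re = 0}) :
    (g (squareProj p)).re ≠ 0 := by
  by_cases hQ : p ∈ Icc (-π) π ×ˢ Icc (-π) π
  · rw [squareProj_of_mem hQ]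
    exact fun h => hp ⟨hQ, h⟩
  · exact (re_neg_of_cos_eq_neg_one happrox (squareProj_mem p)
      (cos_squareProj_eq_neg_one_of_notMem hQ)).ne

end Perturbation

/-- If `g` is continuous and `|g − φ| < 1/20` on `[−π,π]²`, then the zero set
`E = {(x,y) ∈ [−π,π]² : Re g(x,y) = 0}` separates `(0,0)` from `(π,−π)`: no connected
subset of `ℝ² \ E` contains both points. -/
theorem zero_set_separates (g : ℝ × ℝ → ℂ) (hg : Continuous g)
    (happrox : ∀ p ∈ Set.Icc (-π) π ×ˢ Set.Icc (-π) π,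
      ‖g p - phi p‖ < 1 / 20)
    (E : Set (ℝ × ℝ))
    (hE : E = {p | p ∈ Set.Icc (-π) π ×ˢ Set.Icc (-π) π ∧ (g p).re = 0}) :
    ¬ ∃ F : Set (ℝ × ℝ), F ⊆ Eᶜ ∧ IsConnected F ∧
      ((0 : ℝ), (0 : ℝ)) ∈ F ∧ (π, -π) ∈ F := by
  rintro ⟨F, hFE, hF, h0, hcorner⟩
  subst hE
  set h : ℝ × ℝ → ℝ := fun p => (g (squareProj p)).re
  have hcont : Continuous h := Complex.continuous_re.comp (hg.comp continuous_squareProj)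
  have h_origin : 0 < h (0, 0) := by
    simpa [h, squareProj_of_mem origin_mem_square] using re_pos_at_origin happrox
  have h_corner : h (π, -π) < 0 := by
    simpa [h, squareProj_of_mem corner_mem_square] using
      re_neg_of_cos_eq_neg_one happrox corner_mem_square (Or.inl cos_pi)
  obtain ⟨p, hpF, hp0⟩ := hF.isPreconnected.intermediate_value hcorner h0 hcont.continuousOn
    ⟨h_corner.le, h_origin.le⟩
  exact re_squareProj_ne_zero happrox (hFE hpF) hp0
end
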